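/- If λ = 1, then the only ℓ²(ℤ) solution f of 𝓛^{pr}f = f is f = 0; that is, 1 is not an eigenvalue of 𝓛^{pr}. -/

import Mathlib

/-!
On the half-line `m ≥ 0` the eigenvalue equation for `1` is a second-order recurrence. At even
`m` it collapses to `f (m + 1) = -√2 f (m - 1)`, so `f (2k + 1) = (-√2)^(k + 1) f (-1)`, and
square-summability forces `f (-1) = 0`. The operator commutes with the reflection
`m ↦ -m - 1`, so the same argument on the other half-line gives `f 0 = 0`. With two consecutive
zeros, the recurrence propagates them along both half-lines.
-/

open Filter Topology

open Classical in
/-- Pointwise action of the projected normalized Laplacian `𝓛^{pr}` on `ℤ`. -/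
noncomputable def lprFunC (g : ℤ → ℂ) (m : ℤ) : ℂ :=
  if 0 ≤ m then
    if Even m then
      g m - (1/2) * g (m - 1) - ((1 / (2 * Real.sqrt 2) : ℝ) : ℂ) * g (m + 1)
    else
      (3/4) * g m - ((1 / (2 * Real.sqrt 2) : ℝ) : ℂ) * g (m - 1) - (1/2) * g (m + 1)
  else
    if Even (-m - 1) then
      g m - (1/2) * g (m + 1) - ((1 / (2 * Real.sqrt 2) : ℝ) : ℂ) * g (m - 1)
    else
      (3/4) * g m - ((1 / (2 * Real.sqrt 2) : ℝ) : ℂ) * g (m + 1) - (1/2) * g (m - 1)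

theorem Memℓp.tendsto_norm_cofinite_zero {α : Type*} {E : α → Type*}
    [∀ i, NormedAddCommGroup (E i)] {p : ENNReal} {f : ∀ i, E i}
    (hf : Memℓp f p) (hp : 0 < p.toReal) : Tendsto (fun i => ‖f i‖) cofinite (𝓝 0) := by
  have h := (hf.summable hp).tendsto_cofinite_zero.rpow_const
    (p := p.toReal⁻¹) (Or.inr (inv_nonneg.mpr hp.le))
  rw [Real.zero_rpow (inv_ne_zero hp.ne')] at h
  exact h.congr fun i => Real.rpow_rpow_inv (norm_nonneg _) hp.ne'

theorem eq_zero_of_tendsto_pow_mul {𝕜 : Type*} [NormedField 𝕜] {r c : 𝕜} (hr : 1 ≤ ‖r‖)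
    (h : Tendsto (fun k : ℕ => r ^ k * c) atTop (𝓝 0)) : c = 0 := by
  by_contra hc
  have hpow : Tendsto (fun k : ℕ => r ^ k) atTop (𝓝 0) := by
    simpa [mul_assoc, hc] using h.mul_const c⁻¹
  exact (tendsto_pow_atTop_nhds_zero_iff_norm_lt_one.mp hpow).not_ge hr

namespace lprFunC

theorem reflect (g : ℤ → ℂ) {m : ℤ} (hm : 0 ≤ m) :
    lprFunC (fun n => g (-n - 1)) m = lprFunC g (-m - 1) := by
  have hneg : ¬ 0 ≤ -m - 1 := by omega
  have hrefl : -(-m - 1) - 1 = m := by ring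
  simp only [lprFunC, if_pos hm, if_neg hneg, hrefl]
  split_ifs <;> ring_nf

private theorem sqrt_two_ne_zero : ((Real.sqrt 2 : ℝ) : ℂ) ≠ 0 := by
  exact_mod_cast (Real.sqrt_pos.mpr two_pos).ne'

variable {g : ℤ → ℂ} {m : ℤ}

theorem apply_add_one_of_even (hg : lprFunC g m = g m) (hm : 0 ≤ m) (he : Even m) :
    g (m + 1) = -(Real.sqrt 2 : ℂ) * g (m - 1) := by
  rw [lprFunC, if_pos hm, if_pos he] at hg
  have := sqrt_two_ne_zero
  push_cast at hg
  field_simp at hg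
  linear_combination -hg

theorem apply_add_one_of_odd (hg : lprFunC g m = g m) (hm : 0 ≤ m) (ho : ¬ Even m) :
    g (m + 1) = -(g m / 2 + g (m - 1) / (Real.sqrt 2 : ℂ)) := by
  rw [lprFunC, if_pos hm, if_neg ho] at hg
  have := sqrt_two_ne_zero
  push_cast at hg
  field_simp at hg ⊢
  linear_combination -hg / 2

theorem apply_two_mul_add_one (hg : ∀ m, 0 ≤ m → lprFunC g m = g m) (k : ℕ) :
    g (2 * k + 1) = (-(Real.sqrt 2 : ℂ)) ^ (k + 1) * g (-1) := by
  induction k with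
  | zero => simpa using apply_add_one_of_even (hg 0 le_rfl) le_rfl Even.zero
  | succ k ih =>
    have hm : (0 : ℤ) ≤ 2 * k + 2 := by positivity
    have h := apply_add_one_of_even (hg _ hm) hm ⟨k + 1, by ring⟩
    rw [show (2 * k + 2 - 1 : ℤ) = 2 * k + 1 by ring, ih] at h
    push_cast
    rw [show (2 * (k + 1) + 1 : ℤ) = 2 * k + 2 + 1 by ring, h]
    ring

theorem apply_neg_one_eq_zero (hg : ∀ m, 0 ≤ m → lprFunC g m = g m)
    (hg₀ : Tendsto (fun m => ‖g m‖) cofinite (𝓝 0)) : g (-1) = 0 := by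
  have hodd : Function.Injective fun k : ℕ => 2 * (k : ℤ) + 1 := fun a b hab => by
    simpa using hab
  have h : Tendsto (fun k : ℕ => g (2 * k + 1)) atTop (𝓝 0) := by
    rw [tendsto_zero_iff_norm_tendsto_zero, ← Nat.cofinite_eq_atTop]
    exact hg₀.comp hodd.tendsto_cofinite
  have hr : 1 ≤ ‖-(Real.sqrt 2 : ℂ)‖ := by
    rw [norm_neg, Complex.norm_real, Real.norm_of_nonneg (Real.sqrt_nonneg 2)]
    exact Real.one_lt_sqrt_two.le
  have h₁ : -(Real.sqrt 2 : ℂ) * g (-1) = 0 := eq_zero_of_tendsto_pow_mul hr <|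
    h.congr fun k => by rw [apply_two_mul_add_one hg, pow_succ, mul_assoc]
  exact (mul_eq_zero.mp h₁).resolve_left (neg_ne_zero.mpr sqrt_two_ne_zero)

theorem eq_zero_of_nonneg (hg : ∀ m, 0 ≤ m → lprFunC g m = g m) (h₁ : g (-1) = 0)
    (h₀ : g 0 = 0) (hm : 0 ≤ m) : g m = 0 := by
  have key : ∀ n : ℕ, g n = 0 ∧ g (n - 1) = 0 := by
    intro n
    induction n with
    | zero => exact ⟨h₀, by simpa using h₁⟩
    | succ n ih =>
      obtain ⟨hn, hn'⟩ := ih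
      refine ⟨?_, by simpa using hn⟩
      have hn₀ : (0 : ℤ) ≤ n := n.cast_nonneg
      push_cast
      by_cases he : Even (n : ℤ)
      · rw [apply_add_one_of_even (hg n hn₀) hn₀ he, hn', mul_zero]
      · rw [apply_add_one_of_odd (hg n hn₀) hn₀ he, hn, hn']
        simp
  lift m to ℕ using hm
  exact (key m).1

end lprFunC

/-- `1` is not an eigenvalue of `𝓛^{pr}` on `ℓ²(ℤ)`. -/
theorem one_not_eigenvalue (f : ℤ → ℂ) (hf : Memℓp f 2)
    (heig : ∀ m : ℤ, lprFunC f m = f m) : f = 0 := by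
  set g : ℤ → ℂ := fun n => f (-n - 1)
  have hfix_f : ∀ m, 0 ≤ m → lprFunC f m = f m := fun m _ => heig m
  have hfix_g : ∀ m, 0 ≤ m → lprFunC g m = g m := fun m hm =>
    (lprFunC.reflect f hm).trans (heig _)
  have hf₀ : Tendsto (fun m => ‖f m‖) cofinite (𝓝 0) := hf.tendsto_norm_cofinite_zero (by norm_num)
  have hg₀ : Tendsto (fun m => ‖g m‖) cofinite (𝓝 0) :=
    hf₀.comp (Function.Injective.tendsto_cofinite fun a b hab => by simpa using hab)
  have h₁ : f (-1) = 0 := lprFunC.apply_neg_one_eq_zero hfix_f hf₀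
  have h₀ : f 0 = 0 := by simpa [g] using lprFunC.apply_neg_one_eq_zero hfix_g hg₀
  funext m
  rcases le_or_gt 0 m with hm | hm
  · exact lprFunC.eq_zero_of_nonneg hfix_f h₁ h₀ hm
  · have := lprFunC.eq_zero_of_nonneg hfix_g (by simpa [g] using h₀) (by simpa [g] using h₁)
      (m := -m - 1) (by omega)
    simpa [g] using this
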